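/- Let n and k be positive integers with n − k ≥ 1, let 0 < r < k+1, let Φ be a symplectic embedding of B̄²(1) × ℂ^{n−1} into B^{2k}(r) × ℂ^{n−k}, and set a := r/(k+1). Fix j ∈ {1,…,n} and points c_i ∈ S¹(a) for i ≠ j. Define u_j on the closed unit disk D̄ ⊂ ℂ by u_j(w) := Φ(c₁, …, c_{j−1}, √(a/π)·w, c_{j+1}, …, cₙ). Then u_j is smooth with image in B^{2k}(r) × ℂ^{n−k}, its boundary satisfies u_j(∂D̄) ⊆ L_Φ := Φ(S¹(a)ⁿ), and its symplectic area equals a: ∫_{D̄} ω_std(∂_x u_j(w), ∂_y u_j(w)) dx dy = r/(k+1) (writing w = x + iy). -/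

import Mathlib

open scoped Real
open MeasureTheory

noncomputable section

/-- The standard symplectic form on `ℂⁿ`: `ω_std(v,w) = ∑ i, Im(conj(v i) * w i)`. -/
def omegaStd (n : ℕ) (v w : Fin n → ℂ) : ℝ :=
  ∑ i, ((starRingEnd ℂ) (v i) * w i).im

/-- `Φ` is a symplectic embedding of `U ⊆ ℂⁿ` into `V ⊆ ℂⁿ`. -/
def IsSymplecticEmbedding (n : ℕ) (U V : Set (Fin n → ℂ))
    (Φ : (Fin n → ℂ) → (Fin n → ℂ)) : Prop :=
  Set.InjOn Φ U ∧ Set.MapsTo Φ U V ∧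
  ∃ O : Set (Fin n → ℂ), IsOpen O ∧ U ⊆ O ∧ ContDiffOn ℝ (⊤ : ℕ∞) Φ O ∧
    ∀ z ∈ U, ∀ v w : Fin n → ℂ,
      omegaStd n (fderiv ℝ Φ z v) (fderiv ℝ Φ z w) = omegaStd n v w

/-- `B^{2k}(r) × ℂ^{n-k} = {z ∈ ℂⁿ : π ∑_{i<k} |zᵢ|² < r}`. -/
def ballCyl (n k : ℕ) (r : ℝ) : Set (Fin n → ℂ) :=
  {z | Real.pi * ∑ i : Fin n, (if (i : ℕ) < k then ‖z i‖ ^ 2 else 0) < r}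

/-- The product torus `S¹(a)ⁿ = {z ∈ ℂⁿ : π|z_j|² = a for all j}`. -/
def productTorus (n : ℕ) (a : ℝ) : Set (Fin n → ℂ) :=
  {z | ∀ j, Real.pi * ‖z j‖ ^ 2 = a}

/-- The disk `u_j(w) := Φ(c₁, …, c_{j-1}, √(a/π) w, c_{j+1}, …, cₙ)`. -/
def diskMap (n : ℕ) (Φ : (Fin n → ℂ) → (Fin n → ℂ)) (c : Fin n → ℂ) (j : Fin n)
    (a : ℝ) : ℂ → (Fin n → ℂ) :=
  fun w => Φ (Function.update c j ((Real.sqrt (a / Real.pi) : ℂ) * w))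

/-- **Theorem (Maslov-index-2 disks of area `r/(k+1)`).**
With `0 < r < k+1`, `Φ` a symplectic embedding of `B̄²(1) × ℂ^{n-1}` into
`B^{2k}(r) × ℂ^{n-k}`, `a := r/(k+1)`, `j ∈ {1,…,n}` and `c_i ∈ S¹(a)` for `i ≠ j`,
the map `u_j(w) = Φ(c₁, …, √(a/π) w, …, cₙ)` on the closed unit disk is smooth, takes
values in `B^{2k}(r) × ℂ^{n-k}`, sends the boundary circle into `L_Φ = Φ(S¹(a)ⁿ)`,
and has symplectic area `∫_{D̄} ω_std(∂ₓu, ∂ᵧu) = r/(k+1)`. -/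
theorem disk_map_smooth_boundary_area (n k : ℕ) (hk : 0 < k) (hkn : k + 1 ≤ n)
    (r : ℝ) (hr : 0 < r) (hrk : r < k + 1)
    (Φ : (Fin n → ℂ) → (Fin n → ℂ))
    (hΦ : IsSymplecticEmbedding n
      {z : Fin n → ℂ | Real.pi * ‖z ⟨0, by omega⟩‖ ^ 2 ≤ 1} (ballCyl n k r) Φ)
    (j : Fin n) (c : Fin n → ℂ)
    (hc : ∀ i : Fin n, i ≠ j → Real.pi * ‖c i‖ ^ 2 = r / (k + 1)) :
    ContDiffOn ℝ (⊤ : ℕ∞) (diskMap n Φ c j (r / (k + 1))) (Metric.closedBall (0 : ℂ) 1) ∧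
    Set.MapsTo (diskMap n Φ c j (r / (k + 1))) (Metric.closedBall (0 : ℂ) 1)
      (ballCyl n k r) ∧
    Set.MapsTo (diskMap n Φ c j (r / (k + 1))) (Metric.sphere (0 : ℂ) 1)
      (Φ '' productTorus n (r / (k + 1))) ∧
    (∫ w in Metric.closedBall (0 : ℂ) 1,
        omegaStd n (fderiv ℝ (diskMap n Φ c j (r / (k + 1))) w 1)
          (fderiv ℝ (diskMap n Φ c j (r / (k + 1))) w Complex.I)) = r / (k + 1) := by
  have hπ : (0:ℝ) < Real.pi := Real.pi_pos
  have hk1 : (0:ℝ) < (k:ℝ) + 1 := by positivity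
  set a : ℝ := r / ((k:ℝ) + 1) with ha
  have ha0 : 0 < a := div_pos hr hk1
  have ha1 : a < 1 := (div_lt_one hk1).2 hrk
  set s : ℝ := Real.sqrt (a / Real.pi) with hsdef
  have hs0 : 0 ≤ s := Real.sqrt_nonneg _
  have hs2 : s ^ 2 = a / Real.pi := Real.sq_sqrt (by positivity)
  obtain ⟨hinj, hmaps, O, hOopen, hUO, hΦcd, hsymp⟩ := hΦ
  set L : ℂ → (Fin n → ℂ) := fun w => Function.update c j ((s:ℂ) * w) with hLdef
  have hdm : diskMap n Φ c j a = fun w => Φ (L w) := rfl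
  set T : ℂ →L[ℝ] (Fin n → ℂ) :=
    (ContinuousLinearMap.mul ℝ ℂ ((s:ℂ))).smulRight (Pi.single j (1:ℂ)) with hTdef
  have hTapp : ∀ v : ℂ, T v = Pi.single j ((s:ℂ) * v) := by
    intro v
    funext i
    by_cases h : i = j <;>
      simp [hTdef, Pi.single_apply, h]
  have hLderiv : ∀ w : ℂ, HasFDerivAt L T w := by
    intro w
    have hLeq : L = fun w => Function.update c j 0 + T w := by
      funext w i
      by_cases h : i = j <;>
        simp [hLdef, hTapp, Function.update_apply, Pi.single_apply, h]
    rw [hLeq]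
    exact T.hasFDerivAt.const_add _
  -- membership of L w in U for w in the closed ball
  have hLU : ∀ w ∈ Metric.closedBall (0:ℂ) 1,
      Real.pi * ‖L w ⟨0, by omega⟩‖ ^ 2 ≤ 1 := by
    intro w hw
    have hw1 : ‖w‖ ≤ 1 := by simpa [Metric.mem_closedBall] using hw
    by_cases h : (⟨0, by omega⟩ : Fin n) = j
    · simp only [hLdef]
      rw [Function.update_apply, if_pos h]
      have : ‖(s:ℂ) * w‖ ^ 2 = s ^ 2 * ‖w‖ ^ 2 := by
        rw [norm_mul, Complex.norm_real, Real.norm_of_nonneg hs0]; ring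
      rw [this, hs2]
      have h1 : a / Real.pi * ‖w‖ ^ 2 ≤ a / Real.pi * 1 := by
        apply mul_le_mul_of_nonneg_left _ (by positivity)
        nlinarith [norm_nonneg w]
      calc Real.pi * (a / Real.pi * ‖w‖ ^ 2) ≤ Real.pi * (a / Real.pi * 1) := by
            exact mul_le_mul_of_nonneg_left h1 (le_of_lt hπ)
        _ = a := by field_simp
        _ ≤ 1 := le_of_lt ha1
    · simp only [hLdef]
      rw [Function.update_apply, if_neg h]
      rw [hc _ h]
      exact le_of_lt ha1
  have hLO : ∀ w ∈ Metric.closedBall (0:ℂ) 1, L w ∈ O := fun w hw => hUO (hLU w hw)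
  have hΦdiff : ∀ w ∈ Metric.closedBall (0:ℂ) 1, DifferentiableAt ℝ Φ (L w) := by
    intro w hw
    exact (hΦcd.differentiableOn (by simp)).differentiableAt (hOopen.mem_nhds (hLO w hw))
  have hderiv : ∀ w ∈ Metric.closedBall (0:ℂ) 1,
      HasFDerivAt (diskMap n Φ c j a) ((fderiv ℝ Φ (L w)).comp T) w := by
    intro w hw
    rw [hdm]
    exact ((hΦdiff w hw).hasFDerivAt.comp w (hLderiv w))
  refine ⟨?_, ?_, ?_, ?_⟩
  · -- smoothness
    rw [hdm]
    have hLcd : ContDiff ℝ (⊤ : ℕ∞) L := by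
      have hLeq : L = fun w => Function.update c j 0 + T w := by
        funext w i
        by_cases h : i = j <;>
          simp [hLdef, hTapp, Function.update_apply, Pi.single_apply, h]
      rw [hLeq]
      exact contDiff_const.add T.contDiff
    exact hΦcd.comp hLcd.contDiffOn (fun w hw => hLO w hw)
  · -- maps into ballCyl
    intro w hw
    exact hmaps (hLU w hw)
  · -- boundary into torus image
    intro w hw
    have hw1 : ‖w‖ = 1 := by simpa [Metric.mem_sphere, Complex.dist_eq] using hw
    refine ⟨L w, ?_, rfl⟩
    intro i
    by_cases h : i = j
    · simp only [hLdef]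
      rw [Function.update_apply, if_pos h]
      have : ‖(s:ℂ) * w‖ ^ 2 = s ^ 2 * ‖w‖ ^ 2 := by
        rw [norm_mul, Complex.norm_real, Real.norm_of_nonneg hs0]; ring
      rw [this, hs2, hw1]
      field_simp
    · simp only [hLdef]
      simp only [Function.update_apply, if_neg h]
      exact hc _ h
  · -- the area computation
    have key : Set.EqOn
        (fun w => omegaStd n (fderiv ℝ (diskMap n Φ c j a) w 1)
          (fderiv ℝ (diskMap n Φ c j a) w Complex.I))
        (fun _ => a / Real.pi) (Metric.closedBall (0:ℂ) 1) := by
      intro w hw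
      simp only
      rw [(hderiv w hw).fderiv]
      simp only [ContinuousLinearMap.coe_comp', Function.comp_apply]
      rw [hsymp (L w) (hLU w hw), hTapp, hTapp]
      unfold omegaStd
      rw [Finset.sum_eq_single j]
      · simp [Complex.ext_iff, Complex.mul_im, Complex.mul_re]
        nlinarith [hs2]
      · intro i _ h
        simp [Pi.single_apply, h]
      · intro h
        exact absurd (Finset.mem_univ j) h
    rw [setIntegral_congr_fun measurableSet_closedBall key, setIntegral_const, measureReal_def,
      Complex.volume_closedBall]
    simp only [one_pow, ENNReal.ofReal_one, one_mul, smul_eq_mul]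
    rw [ENNReal.coe_toReal, NNReal.coe_real_pi]
    field_simp
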